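/- Let d be an odd positive integer and let ℓ₁,…,ℓ_d be a sequence of even positive integers with product V = ℓ₁⋯ℓ_d. Let C be the self-complementary ideal C = {(a₁,…,a_d) ∈ [ℓ₁]×⋯×[ℓ_d] : #{i : aᵢ ≤ ℓᵢ/2} > d/2}. Then for every self-complementary ideal I of [ℓ₁]×⋯×[ℓ_d], |I \ C| ≤ (1/4 − (1/2^(d+1))·C(d−1, (d−1)/2))·V, where C(·,·) is the binomial coefficient. Consequently the radius of the flip graph G(ℓ₁,…,ℓ_d) is at most (1/4 − (1/2^(d+1))·C(d−1, (d−1)/2))·V, and the vertex C achieves this eccentricity bound. -/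

import Mathlib

open Finset

/-- An ideal (downward-closed subset, possibly empty) of a finite poset. -/
def IsIdeal {P : Type*} [PartialOrder P] (I : Finset P) : Prop :=
  ∀ a ∈ I, ∀ b, b ≤ a → b ∈ I

/-- A self-complementary ideal with respect to an involution `φ`. -/
def IsSCIdeal {P : Type*} [PartialOrder P] (φ : P → P) (I : Finset P) : Prop :=
  IsIdeal I ∧ ∀ a, a ∈ I ↔ φ a ∉ I

/-- The flip graph on self-complementary ideals: two ideals are adjacent when they
differ in exactly one element each way. -/
def FlipGraph {P : Type*} [PartialOrder P] [DecidableEq P] (φ : P → P) :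
    SimpleGraph {I : Finset P // IsSCIdeal φ I} where
  Adj I J := I ≠ J ∧ (I.1 \ J.1).card = 1 ∧ (J.1 \ I.1).card = 1
  symm := ⟨fun _ _ h => ⟨h.1.symm, h.2.2, h.2.1⟩⟩
  loopless := ⟨fun _ h => h.1 rfl⟩

/-- Eccentricity of a vertex: its maximum distance to any vertex. -/
noncomputable def eccentricity {V : Type*} (G : SimpleGraph V) (v : V) : ℕ :=
  ⨆ u, G.dist v u

/-- Diameter of a graph: the maximum eccentricity. -/
noncomputable def graphDiam {V : Type*} (G : SimpleGraph V) : ℕ :=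
  ⨆ v, eccentricity G v

/-- Radius of a graph: the minimum eccentricity. -/
noncomputable def graphRadius {V : Type*} (G : SimpleGraph V) : ℕ :=
  ⨅ v, eccentricity G v

/-- The order-reversing involution `aᵢ ↦ ℓᵢ + 1 - aᵢ` on a product of chains
(0-indexed via `Fin.rev`). -/
def chainRev {d : ℕ} (ℓ : Fin d → ℕ) (a : ∀ i, Fin (ℓ i)) : ∀ i, Fin (ℓ i) :=
  fun i => (a i).rev

/-- The ideal `{a : #{i : aᵢ ≤ ℓᵢ/2} > d/2}` (in 0-indexed coordinates,
`aᵢ ≤ ℓᵢ/2` becomes `2(aᵢ + 1) ≤ ℓᵢ`, and `card > d/2` becomes `d < 2·card`). -/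
def majorityIdeal (d : ℕ) (ℓ : Fin d → ℕ) : Finset (∀ i, Fin (ℓ i)) :=
  Finset.univ.filter (fun a =>
    d < 2 * (Finset.univ.filter (fun i : Fin d => 2 * ((a i : ℕ) + 1) ≤ ℓ i)).card)

/-!
`C` is self-complementary because `φ` exchanges the low and high coordinates of a point and `d`
is odd. For the bound, fold every point onto the box of all-low points by reflecting its high
coordinates. A point is determined by its fold and its set of low coordinates, and within one
fibre two points of a self-complementary ideal `I` cannot have disjoint low sets (that would
give `φ a ≤ b`). So the low sets of the points of `I \ C` in a fibre form an intersecting family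
of sets of size at most `(d - 1) / 2`, and Erdős–Ko–Rado bounds it by
`∑_{k < (d-1)/2} C(d-1, k) = (2^(d-1) - C(d-1, (d-1)/2)) / 2`; there are `V / 2^d` fibres.
Finally, flipping a maximal element `a` of `I \ J` to `φ a` gives a self-complementary ideal
adjacent to `I` and one step closer to `J`, so the distance from `I` to `J` is at most `|I \ J|`.
-/

lemma graphRadius_le_eccentricity {V : Type*} (G : SimpleGraph V) (v : V) :
    graphRadius G ≤ eccentricity G v :=
  ciInf_le (OrderBot.bddBelow _) v

section FlipGraph

variable {P : Type*} [PartialOrder P] {φ : P → P} {I J : Finset P}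

lemma IsSCIdeal.not_map_le (hI : IsSCIdeal φ I) {a b : P} (ha : a ∈ I) (hb : b ∈ I) :
    ¬ φ a ≤ b :=
  fun h => (hI.2 a).1 ha (hI.1 b hb _ h)

lemma IsSCIdeal.eq_of_subset (hI : IsSCIdeal φ I) (hJ : IsSCIdeal φ J) (h : I ⊆ J) : I = J :=
  h.antisymm fun x hx => (hI.2 x).2 fun hφx => (hJ.2 x).1 hx (h hφx)

variable [DecidableEq P]

lemma IsSCIdeal.flip (hφ : Function.Involutive φ) (hanti : Antitone φ) (hI : IsSCIdeal φ I)
    {a : P} (ha : a ∈ I) (hmax : ∀ b ∈ I, a ≤ b → b = a) (hnle : ¬ a ≤ φ a) :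
    IsSCIdeal φ (insert (φ a) (I.erase a)) := by
  have hφa : φ a ∉ I := (hI.2 a).1 ha
  refine ⟨fun c hc b hbc => ?_, fun x => ?_⟩
  · simp only [mem_insert, mem_erase] at hc ⊢
    rcases hc with rfl | ⟨hca, hc⟩
    · by_cases hφb : φ b ∈ I
      · left
        rw [← hmax _ hφb (hφ a ▸ hanti hbc), hφ]
      · exact .inr ⟨by rintro rfl; exact hnle hbc, (hI.2 b).2 hφb⟩
    · exact .inr ⟨by rintro rfl; exact hca (hmax c hc hbc), hI.1 c hc b hbc⟩
  · simp only [mem_insert, mem_erase, hφ.injective.eq_iff, not_or, not_and]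
    have := hI.2 x
    have : φ x = a ↔ x = φ a := by rw [← hφ.injective.eq_iff, hφ]
    grind

lemma flipGraph_adj_flip (hφ : Function.Involutive φ) (hanti : Antitone φ)
    (hI : IsSCIdeal φ I) {a : P} (ha : a ∈ I) (hmax : ∀ b ∈ I, a ≤ b → b = a)
    (hnle : ¬ a ≤ φ a) :
    (FlipGraph φ).Adj ⟨I, hI⟩ ⟨_, hI.flip hφ hanti ha hmax hnle⟩ := by
  have hφa : φ a ∉ I := (hI.2 a).1 ha
  have hne : φ a ≠ a := fun h => hφa (by rwa [h])
  refine ⟨fun h => ?_, card_eq_one.2 ⟨a, ?_⟩, card_eq_one.2 ⟨φ a, ?_⟩⟩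
  · have := congrArg (a ∈ ·.1) h
    simp [ha, hne.symm] at this
  all_goals ext x; simp only [mem_sdiff, mem_insert, mem_erase, mem_singleton]; grind

lemma flipGraph_exists_walk_length_le (hφ : Function.Involutive φ) (hanti : Antitone φ)
    (hI : IsSCIdeal φ I) (hJ : IsSCIdeal φ J) :
    ∃ p : (FlipGraph φ).Walk ⟨I, hI⟩ ⟨J, hJ⟩, p.length ≤ (I \ J).card := by
  induction hn : (I \ J).card generalizing I with
  | zero =>
    obtain rfl := hI.eq_of_subset hJ (sdiff_eq_empty_iff_subset.1 (card_eq_zero.1 hn))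
    exact ⟨.nil, le_rfl⟩
  | succ n ih =>
    obtain ⟨a, haIJ, hamax⟩ := (I \ J).exists_maximal (card_pos.1 (hn ▸ n.succ_pos))
    obtain ⟨haI, haJ⟩ := mem_sdiff.1 haIJ
    have hmax : ∀ b ∈ I, a ≤ b → b = a := fun b hb hab =>
      (hamax (mem_sdiff.2 ⟨hb, fun hbJ => haJ (hJ.1 b hbJ a hab)⟩) hab).antisymm hab
    have hφaJ : φ a ∈ J := (hJ.2 _).2 (by rwa [hφ])
    have hnle : ¬ a ≤ φ a := fun h => haJ (hJ.1 _ hφaJ a h)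
    have hcard : (insert (φ a) (I.erase a) \ J).card = n := by
      rw [insert_sdiff_of_mem _ hφaJ, erase_sdiff_comm, card_erase_of_mem haIJ, hn,
        n.add_sub_cancel]
    obtain ⟨p, hp⟩ := ih (hI.flip hφ hanti haI hmax hnle) hcard
    exact ⟨.cons (flipGraph_adj_flip hφ hanti hI haI hmax hnle) p, by simpa using hp⟩

lemma eccentricity_flipGraph_le (hφ : Function.Involutive φ) (hanti : Antitone φ)
    (hJ : IsSCIdeal φ J) {N : ℕ} (hN : ∀ I, IsSCIdeal φ I → (I \ J).card ≤ N) :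
    eccentricity (FlipGraph φ) ⟨J, hJ⟩ ≤ N := by
  have : Nonempty {I : Finset P // IsSCIdeal φ I} := ⟨⟨J, hJ⟩⟩
  refine ciSup_le fun I => ?_
  obtain ⟨p, hp⟩ := flipGraph_exists_walk_length_le hφ hanti I.2 hJ
  exact (SimpleGraph.dist_comm.trans_le (SimpleGraph.dist_le p)).trans (hp.trans (hN I.1 I.2))

end FlipGraph

lemma card_le_sum_choose_of_intersecting {n r : ℕ} {𝒜 : Finset (Finset (Fin n))}
    (h𝒜 : (𝒜 : Set (Finset (Fin n))).Intersecting) (hr : r ≤ n / 2)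
    (hsize : ∀ A ∈ 𝒜, #A ≤ r) :
    #𝒜 ≤ ∑ k ∈ range r, (n - 1).choose k := by
  have hpos : ∀ A ∈ 𝒜, 0 < #A := fun A hA =>
    card_pos.2 (nonempty_iff_ne_empty.2 (h𝒜.ne_bot (mem_coe.2 hA)))
  have hmaps : ∀ A ∈ 𝒜, #A - 1 ∈ range r := fun A hA => by
    have := hpos A hA; have := hsize A hA; rw [mem_range]; omega
  rw [card_eq_sum_card_fiberwise hmaps]
  refine sum_le_sum fun k hk => ?_
  have hsized : (({A ∈ 𝒜 | #A - 1 = k} : Finset _) : Set (Finset (Fin n))).Sized (k + 1) :=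
    fun A hA => by
      obtain ⟨hA, hk⟩ := mem_filter.1 hA
      have := hpos A hA; omega
  have := erdos_ko_rado (h𝒜.mono (coe_subset.2 (filter_subset _ _))) hsized
    (by rw [mem_range] at hk; omega)
  simpa using this

lemma two_mul_sum_range_choose_add_choose (m : ℕ) :
    2 * ∑ k ∈ range m, (2 * m).choose k + (2 * m).choose m = 4 ^ m := by
  have hshift := sum_range_succ' (fun k => (2 * m).choose k) m
  have hlast := sum_range_succ (fun k => (2 * m).choose k) m
  rw [← Nat.sum_range_choose_halfway m, sum_range_succ', Nat.choose_zero_right]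
  simp only [Nat.choose_succ_succ', sum_add_distrib, Nat.choose_zero_right] at hshift ⊢
  omega

section ChainProduct

variable {d : ℕ} {ℓ : Fin d → ℕ}

lemma chainRev_involutive : Function.Involutive (chainRev ℓ) :=
  fun _ => funext fun _ => Fin.rev_rev _

lemma chainRev_antitone : Antitone (chainRev ℓ) := fun _ _ h i => Fin.rev_le_rev.2 (h i)

def lowSet (ℓ : Fin d → ℕ) (a : ∀ i, Fin (ℓ i)) : Finset (Fin d) :=
  {i | 2 * ((a i : ℕ) + 1) ≤ ℓ i}

lemma mem_lowSet {a : ∀ i, Fin (ℓ i)} {i : Fin d} :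
    i ∈ lowSet ℓ a ↔ 2 * ((a i : ℕ) + 1) ≤ ℓ i := by simp [lowSet]

lemma mem_majorityIdeal {a : ∀ i, Fin (ℓ i)} :
    a ∈ majorityIdeal d ℓ ↔ d < 2 * (lowSet ℓ a).card := by
  simp [majorityIdeal, lowSet]

lemma lowSet_chainRev (heven : ∀ i, Even (ℓ i)) (a : ∀ i, Fin (ℓ i)) :
    lowSet ℓ (chainRev ℓ a) = (lowSet ℓ a)ᶜ := by
  ext i
  obtain ⟨c, hc⟩ := heven i
  have := (a i).is_lt
  simp only [mem_lowSet, mem_compl, chainRev, Fin.val_rev]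
  omega

lemma lowSet_anti : Antitone (lowSet ℓ) := fun a b h i => by
  simp only [mem_lowSet]; have : (a i : ℕ) ≤ b i := h i; omega

lemma isSCIdeal_majorityIdeal (hd : Odd d) (heven : ∀ i, Even (ℓ i)) :
    IsSCIdeal (chainRev ℓ) (majorityIdeal d ℓ) := by
  refine ⟨fun a ha b hba => ?_, fun a => ?_⟩
  · rw [mem_majorityIdeal] at ha ⊢
    exact ha.trans_le (Nat.mul_le_mul_left 2 (card_le_card (lowSet_anti hba)))
  · rw [mem_majorityIdeal, mem_majorityIdeal, lowSet_chainRev heven, card_compl,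
      Fintype.card_fin]
    have := card_le_univ (lowSet ℓ a)
    rw [Fintype.card_fin] at this
    obtain ⟨m, rfl⟩ := hd
    omega

def lowFold (ℓ : Fin d → ℕ) (a : ∀ i, Fin (ℓ i)) : ∀ i, Fin (ℓ i) :=
  fun i => if i ∈ lowSet ℓ a then a i else (a i).rev

def lowBox (ℓ : Fin d → ℕ) : Finset (∀ i, Fin (ℓ i)) :=
  Fintype.piFinset fun i => {x | 2 * ((x : ℕ) + 1) ≤ ℓ i}

lemma card_lowBox : (lowBox ℓ).card = ∏ i, ℓ i / 2 := by
  rw [lowBox, Fintype.card_piFinset]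
  refine prod_congr rfl fun i _ => ?_
  have : univ.filter (fun x : Fin (ℓ i) => 2 * ((x : ℕ) + 1) ≤ ℓ i) =
      univ.filter fun x : Fin (ℓ i) => (x : ℕ) < ℓ i / 2 := by
    ext x; simp only [mem_filter_univ]; omega
  rw [this, Fin.card_filter_val_lt, min_eq_right (Nat.div_le_self _ _)]

lemma lowFold_mem_lowBox (heven : ∀ i, Even (ℓ i)) (a : ∀ i, Fin (ℓ i)) :
    lowFold ℓ a ∈ lowBox ℓ := by
  simp only [lowBox, Fintype.mem_piFinset, mem_filter_univ]
  intro i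
  obtain ⟨c, hc⟩ := heven i
  have := (a i).is_lt
  unfold lowFold
  split_ifs with h <;> rw [mem_lowSet] at h
  · exact h
  · rw [Fin.val_rev]; omega

lemma lowFold_le (a : ∀ i, Fin (ℓ i)) : lowFold ℓ a ≤ a := fun i => by
  unfold lowFold
  split_ifs with h
  · exact le_rfl
  · rw [mem_lowSet] at h
    rw [Fin.le_def, Fin.val_rev]
    omega

lemma eq_of_lowFold_eq_of_lowSet_eq {a b : ∀ i, Fin (ℓ i)} (hf : lowFold ℓ a = lowFold ℓ b)
    (hl : lowSet ℓ a = lowSet ℓ b) : a = b := funext fun i => by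
  have := congrFun hf i
  unfold lowFold at this
  rw [hl] at this
  split_ifs at this
  · exact this
  · exact Fin.rev_injective this

lemma chainRev_le_of_lowFold_eq_of_disjoint {a b : ∀ i, Fin (ℓ i)}
    (hf : lowFold ℓ a = lowFold ℓ b) (hl : Disjoint (lowSet ℓ a) (lowSet ℓ b)) :
    chainRev ℓ a ≤ b := fun i => by
  have hfi := congrFun hf i
  unfold lowFold at hfi
  by_cases ha : i ∈ lowSet ℓ a
  · rw [if_pos ha, if_neg (disjoint_left.1 hl ha)] at hfi
    simp [chainRev, hfi]
  · rw [if_neg ha] at hfi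
    exact hfi.trans_le (lowFold_le b i)

lemma card_sdiff_majorityIdeal_le (heven : ∀ i, Even (ℓ i)) {I : Finset (∀ i, Fin (ℓ i))}
    (hI : IsSCIdeal (chainRev ℓ) I) :
    #(I \ majorityIdeal d ℓ) ≤ (∑ k ∈ range (d / 2), (d - 1).choose k) * ∏ i, ℓ i / 2 := by
  rw [card_eq_sum_card_fiberwise fun a _ => lowFold_mem_lowBox heven a, ← card_lowBox, mul_comm,
    ← smul_eq_mul, ← sum_const]
  refine sum_le_sum fun q _ => ?_
  have hfiber : ∀ a ∈ {a ∈ I \ majorityIdeal d ℓ | lowFold ℓ a = q},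
      a ∈ I ∧ a ∉ majorityIdeal d ℓ ∧ lowFold ℓ a = q := by
    simp only [mem_filter, mem_sdiff, and_assoc, imp_self, implies_true]
  rw [← card_image_of_injOn fun a ha b hb hab => eq_of_lowFold_eq_of_lowSet_eq
    (((hfiber a ha).2.2).trans (hfiber b hb).2.2.symm) hab]
  refine card_le_sum_choose_of_intersecting ?_ le_rfl ?_
  · simp only [coe_image, Set.Intersecting, Set.mem_image, mem_coe]
    rintro _ ⟨a, ha, rfl⟩ _ ⟨b, hb, rfl⟩ hdisj
    exact hI.not_map_le (hfiber a ha).1 (hfiber b hb).1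
      (chainRev_le_of_lowFold_eq_of_disjoint
        ((hfiber a ha).2.2.trans (hfiber b hb).2.2.symm) hdisj)
  · simp only [mem_image]
    rintro _ ⟨a, ha, rfl⟩
    have := (hfiber a ha).2.1
    rw [mem_majorityIdeal] at this
    omega

lemma two_pow_mul_sum_choose_mul_prod_half (hd : Odd d) (heven : ∀ i, Even (ℓ i)) :
    2 ^ (d + 1) * ((∑ k ∈ range (d / 2), (d - 1).choose k) * ∏ i, ℓ i / 2) =
      (2 ^ (d - 1) - (d - 1).choose ((d - 1) / 2)) * ∏ i, ℓ i := by
  have hprod : ∏ i, ℓ i = 2 ^ d * ∏ i, ℓ i / 2 := by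
    rw [← Fin.prod_const d 2, ← prod_mul_distrib]
    exact prod_congr rfl fun i _ => (Nat.two_mul_div_two_of_even (heven i)).symm
  obtain ⟨m, rfl⟩ := hd
  have hsum := two_mul_sum_range_choose_add_choose m
  rw [hprod, show (2 * m + 1) / 2 = m by omega, Nat.add_sub_cancel,
    Nat.mul_div_cancel_left _ two_pos, pow_mul, show (2 : ℕ) ^ 2 = 4 by rfl, ← hsum,
    Nat.add_sub_cancel]
  ring

end ChainProduct

theorem flipGraph_radius_upper_bound_odd_general (d : ℕ) (hd : Odd d) (ℓ : Fin d → ℕ)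
    (heven : ∀ i, Even (ℓ i)) :
    IsSCIdeal (chainRev ℓ) (majorityIdeal d ℓ) ∧
    (∀ I : Finset (∀ i, Fin (ℓ i)), IsSCIdeal (chainRev ℓ) I →
      2 ^ (d + 1) * (I \ majorityIdeal d ℓ).card ≤
        (2 ^ (d - 1) - Nat.choose (d - 1) ((d - 1) / 2)) * ∏ i, ℓ i) ∧
    2 ^ (d + 1) * graphRadius (FlipGraph (chainRev ℓ)) ≤
      (2 ^ (d - 1) - Nat.choose (d - 1) ((d - 1) / 2)) * ∏ i, ℓ i ∧
    (∀ hC : IsSCIdeal (chainRev ℓ) (majorityIdeal d ℓ),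
      2 ^ (d + 1) * eccentricity (FlipGraph (chainRev ℓ)) ⟨majorityIdeal d ℓ, hC⟩ ≤
        (2 ^ (d - 1) - Nat.choose (d - 1) ((d - 1) / 2)) * ∏ i, ℓ i) := by
  rw [← two_pow_mul_sum_choose_mul_prod_half hd heven]
  have hcard : ∀ I, IsSCIdeal (chainRev ℓ) I → #(I \ majorityIdeal d ℓ) ≤
      (∑ k ∈ range (d / 2), (d - 1).choose k) * ∏ i, ℓ i / 2 :=
    fun _ hI => card_sdiff_majorityIdeal_le heven hI
  have hecc : ∀ hC : IsSCIdeal (chainRev ℓ) (majorityIdeal d ℓ),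
      eccentricity (FlipGraph (chainRev ℓ)) ⟨majorityIdeal d ℓ, hC⟩ ≤
        (∑ k ∈ range (d / 2), (d - 1).choose k) * ∏ i, ℓ i / 2 :=
    fun hC => eccentricity_flipGraph_le chainRev_involutive chainRev_antitone hC hcard
  have hC := isSCIdeal_majorityIdeal hd heven
  exact ⟨hC, fun I hI => Nat.mul_le_mul_left _ (hcard I hI),
    Nat.mul_le_mul_left _ ((graphRadius_le_eccentricity _ _).trans (hecc hC)),
    fun hC' => Nat.mul_le_mul_left _ (hecc hC')⟩

/-- For `d` odd and all `ℓᵢ` even, the majority ideal `C` is self-complementary, every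
self-complementary ideal `I` satisfies
`2^(d+1) · |I \ C| ≤ (2^(d-1) - C(d-1, (d-1)/2)) · V`; consequently the radius of the
flip graph is at most `(1/4 - 2^{-(d+1)} C(d-1,(d-1)/2)) · V`, and the vertex `C`
achieves this eccentricity bound. -/
theorem flipGraph_radius_upper_bound_odd (d : ℕ) (hd : Odd d) (ℓ : Fin d → ℕ)
    (hpos : ∀ i, 0 < ℓ i) (heven : ∀ i, Even (ℓ i)) :
    IsSCIdeal (chainRev ℓ) (majorityIdeal d ℓ) ∧
    (∀ I : Finset (∀ i, Fin (ℓ i)), IsSCIdeal (chainRev ℓ) I →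
      2 ^ (d + 1) * (I \ majorityIdeal d ℓ).card ≤
        (2 ^ (d - 1) - Nat.choose (d - 1) ((d - 1) / 2)) * ∏ i, ℓ i) ∧
    2 ^ (d + 1) * graphRadius (FlipGraph (chainRev ℓ)) ≤
      (2 ^ (d - 1) - Nat.choose (d - 1) ((d - 1) / 2)) * ∏ i, ℓ i ∧
    (∀ hC : IsSCIdeal (chainRev ℓ) (majorityIdeal d ℓ),
      2 ^ (d + 1) * eccentricity (FlipGraph (chainRev ℓ)) ⟨majorityIdeal d ℓ, hC⟩ ≤
        (2 ^ (d - 1) - Nat.choose (d - 1) ((d - 1) / 2)) * ∏ i, ℓ i) :=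
  flipGraph_radius_upper_bound_odd_general d hd ℓ heven
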